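/- Let Ω₁ be real-path-connected, Ω₂ Ω₁-stem-preserving, g : Ω₂ → ℍ path-slice, c ∈ ℍ, γ ∈ 𝒫(ℂⁿ, Ω₁), I ∈ 𝕊(Ω₁, γ), and q := γ^I(1). Then (c, Ic)·F_{Ω₁}^g(γ) = (c, −Ic)·F_{Ω₁}^g(γ̄) = (c, 𝔍(q)c)·ℱ_{Ω₁}^g(q). -/

import Mathlib

noncomputable section
open Quaternion Matrix

abbrev Hq := Quaternion ℝ

/-- The set of quaternionic imaginary units. -/
def Sph : Set Hq := {I | I ^ 2 = -1}

/-- `Ψ_i^I` applied to a single complex number: `x + y i ↦ x + y I`. -/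
def psi (I : Hq) (z : ℂ) : Hq := (z.re : Hq) + z.im • I

/-- `Ψ_i^I : ℂⁿ → ℂ_Iⁿ`, componentwise. -/
def liftMap {n : ℕ} (I : Hq) (z : Fin n → ℂ) : Fin n → Hq := fun k => psi I (z k)

/-- The weakly slice cone `Hqₛⁿ = ⋃_{I∈𝕊} ℂ_Iⁿ`. -/
def HSn (n : ℕ) : Set (Fin n → Hq) := {q | ∃ I ∈ Sph, ∃ z : Fin n → ℂ, q = liftMap I z}

/-- A point of `ℂⁿ` is real. -/
def isRealPt {n : ℕ} (z : Fin n → ℂ) : Prop := ∀ k, (z k).im = 0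

/-- A point of `Hqⁿ` is real. -/
def isRealH {n : ℕ} (q : Fin n → Hq) : Prop := ∀ k, q k = ((q k).re : Hq)

/-- The lifted path `γ^I = Ψ_i^I ∘ γ`. -/
def liftP {n : ℕ} (γ : C(unitInterval, Fin n → ℂ)) (I : Hq) (t : unitInterval) : Fin n → Hq :=
  liftMap I (γ t)

/-- `𝕊(Ω, γ) = {I ∈ 𝕊 : γ^I ⊂ Ω}`. -/
def SUnits {n : ℕ} (Ω : Set (Fin n → Hq)) (γ : C(unitInterval, Fin n → ℂ)) : Set Hq :=
  {I | I ∈ Sph ∧ ∀ t, liftP γ I t ∈ Ω}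

/-- `𝒫(ℂⁿ, Ω)`: continuous paths starting in `ℝⁿ` with some lift inside `Ω`. -/
def PathsTo {n : ℕ} (Ω : Set (Fin n → Hq)) : Set C(unitInterval, Fin n → ℂ) :=
  {γ | isRealPt (γ 0) ∧ ∃ I, I ∈ SUnits Ω γ}

/-- `F` is a path-slice stem function of `f` on `Ω`:
`f(γ^I(1)) = (1, I)·F(γ)`. -/
def IsStem {n : ℕ} (Ω : Set (Fin n → Hq)) (f : (Fin n → Hq) → Hq)
    (F : C(unitInterval, Fin n → ℂ) → Fin 2 → Hq) : Prop :=
  ∀ γ ∈ PathsTo Ω, ∀ I ∈ SUnits Ω γ, f (liftP γ I 1) = F γ 0 + I * F γ 1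

/-- `f` is path-slice on `Ω`. -/
def IsPathSlice {n : ℕ} (Ω : Set (Fin n → Hq)) (f : (Fin n → Hq) → Hq) : Prop :=
  ∃ F, IsStem Ω f F

/-- `Ω` is real-path-connected. -/
def RealPathConnected {n : ℕ} (Ω : Set (Fin n → Hq)) : Prop :=
  ∀ q ∈ Ω, ∃ γ ∈ PathsTo Ω, ∃ I ∈ SUnits Ω γ, liftP γ I 1 = q

/-- `Ω₂` is `Ω₁`-stem-preserving: (i) every path of `𝒫(ℂⁿ,Ω₁)` has at least two
units in `𝕊(Ω₂,γ)`; (ii) two paths with the same endpoint share `≠ 1` units. -/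
def StemPreserving {n : ℕ} (Ω₁ Ω₂ : Set (Fin n → Hq)) : Prop :=
  (∀ γ ∈ PathsTo Ω₁, ∃ I ∈ SUnits Ω₂ γ, ∃ J ∈ SUnits Ω₂ γ, I ≠ J) ∧
  (∀ α ∈ PathsTo Ω₁, ∀ β ∈ PathsTo Ω₁, α 1 = β 1 →
    ∀ I ∈ SUnits Ω₂ α ∩ SUnits Ω₂ β, ∃ J ∈ SUnits Ω₂ α ∩ SUnits Ω₂ β, J ≠ I)

/-- The formula `((1,I),(1,J))⁻¹ (f(γ^I(1)), f(γ^J(1)))ᵀ`. -/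
def stemFormula {n : ℕ} (f : (Fin n → Hq) → Hq) (γ : C(unitInterval, Fin n → ℂ)) (I J : Hq) :
    Fin 2 → Hq :=
  ((I - J)⁻¹ • !![I, -J; (1 : Hq), -1]).mulVec ![f (liftP γ I 1), f (liftP γ J 1)]

/-- The sub-stem function `F_{Ω₁}^f` (depends only on `Ω₂` and `f`). -/
noncomputable def subStem {n : ℕ} (Ω₂ : Set (Fin n → Hq)) (f : (Fin n → Hq) → Hq)
    (γ : C(unitInterval, Fin n → ℂ)) : Fin 2 → Hq := by
  classical
  exact if h : ∃ p : Hq × Hq, p.1 ∈ SUnits Ω₂ γ ∧ p.2 ∈ SUnits Ω₂ γ ∧ p.1 ≠ p.2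
    then stemFormula f γ h.choose.1 h.choose.2
    else 0

/-- Normalized imaginary part of a quaternion. -/
def imUnit (a : Hq) : Hq := (‖a - (a.re : Hq)‖)⁻¹ • (a - (a.re : Hq))

/-- The map `𝔍 : Hqₛⁿ → 𝕊 ∪ {0}`. -/
noncomputable def Jmap {n : ℕ} (q : Fin n → Hq) : Hq := by
  classical
  exact if h : ∃ k : Fin n, q k ≠ ((q k).re : Hq) then
    imUnit (q ((Finset.univ.filter fun k => q k ≠ ((q k).re : Hq)).min'
      ⟨h.choose, Finset.mem_filter.2 ⟨Finset.mem_univ _, h.choose_spec⟩⟩))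
  else 0

/-- Componentwise complex conjugate of a path. -/
def conjPath {n : ℕ} (γ : C(unitInterval, Fin n → ℂ)) : C(unitInterval, Fin n → ℂ) :=
  ⟨fun t k => star (γ t k),
    continuous_pi fun k => continuous_star.comp ((continuous_apply k).comp γ.continuous)⟩

/-- The point-form sub-stem function `ℱ_{Ω₁}^f : Ω₁ → Hq^{2×1}`. -/
noncomputable def pointStem {n : ℕ} (Ω₁ Ω₂ : Set (Fin n → Hq)) (f : (Fin n → Hq) → Hq)
    (q : Fin n → Hq) : Fin 2 → Hq := by
  classical
  exact if isRealH q then ![f q, 0]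
    else if h : ∃ γ, γ ∈ PathsTo Ω₁ ∧ (∀ t, liftP γ (Jmap q) t ∈ Ω₁) ∧ liftP γ (Jmap q) 1 = q
    then subStem Ω₂ f h.choose
    else 0

/-- The `*`-product of functions: `(f*g)(q) = (f(q), 𝔍(q)f(q)) · ℱ_{Ω₁}^g(q)`. -/
noncomputable def starProd {n : ℕ} (Ω₁ Ω₂ : Set (Fin n → Hq)) (f g : (Fin n → Hq) → Hq)
    (q : Fin n → Hq) : Hq :=
  f q * pointStem Ω₁ Ω₂ g q 0 + (Jmap q * f q) * pointStem Ω₁ Ω₂ g q 1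

/-- The `*`-product on `Hq^{2×1}` coming from `Hq ⊗_ℝ ℂ`. -/
def vstar (p q : Fin 2 → Hq) : Fin 2 → Hq :=
  ![p 0 * q 0 - p 1 * q 1, p 1 * q 0 + p 0 * q 1]

/-- `Ω` is slice-open: a subset of `Hqₛⁿ` all of whose slices are open. -/
def SliceOpen {n : ℕ} (Ω : Set (Fin n → Hq)) : Prop :=
  Ω ⊆ HSn n ∧ ∀ I ∈ Sph, IsOpen {z : Fin n → ℂ | liftMap I z ∈ Ω}

/-- `Ω` is slice-connected. -/
def SliceConnected {n : ℕ} (Ω : Set (Fin n → Hq)) : Prop :=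
  ∀ U V : Set (Fin n → Hq), SliceOpen U → SliceOpen V → Ω ⊆ U ∪ V →
    (Ω ∩ U).Nonempty → (Ω ∩ V).Nonempty → (Ω ∩ U ∩ V).Nonempty

/-- `Ω` is a slice-domain. -/
def SliceDomain {n : ℕ} (Ω : Set (Fin n → Hq)) : Prop :=
  SliceOpen Ω ∧ SliceConnected Ω

/-- `Ω` is self-stem-preserving. -/
def SelfStemPreserving {n : ℕ} (Ω : Set (Fin n → Hq)) : Prop :=
  RealPathConnected Ω ∧ StemPreserving Ω Ω

/-- `Ω` is open in the Euclidean subspace topology of `Hqₛⁿ`. -/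
def EuclideanOpenIn {n : ℕ} (Ω : Set (Fin n → Hq)) : Prop :=
  ∃ U : Set (Fin n → Hq), IsOpen U ∧ Ω = U ∩ HSn n

/-- `Ω` is weakly axially symmetric. -/
def WeaklyAxiallySymmetric {n : ℕ} (Ω : Set (Fin n → Hq)) : Prop :=
  ∀ (x y : Fin n → ℝ) (I : Hq), I ∈ Sph →
    (fun k => (x k : Hq) + y k • I) ∈ Ω → (fun k => (x k : Hq) - y k • I) ∈ Ω

/-! The inversion formula `stemFormula` recovers `(A, B)` from any two distinct units `K` with
`g(γ^K(1)) = A + K B`, so `F_{Ω₁}^g(γ)` is the stem of `g` at `γ`; passing to `γ̄` replaces `K` by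
`-K`, which flips the sign of `B`. Two paths with a common endpoint and a common unit of `Ω₁`
concatenate to a path of `𝒫(ℂⁿ, Ω₁)`, whose two distinct units of `Ω₂` serve both paths, so
their stems agree. Hence `ℱ_{Ω₁}^g(q)` is `F_{Ω₁}^g` at `γ` or at `γ̄` according as
`𝔍(q) = I` or `𝔍(q) = -I`. -/

section ImaginaryUnits

variable {I : Hq}

lemma norm_eq_one_of_mem_Sph (hI : I ∈ Sph) : ‖I‖ = 1 := by
  have h : ‖I‖ ^ 2 = 1 := by rw [← norm_pow, show I ^ 2 = -1 from hI, norm_neg, norm_one]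
  exact (pow_eq_one_iff_of_nonneg (norm_nonneg I) two_ne_zero).1 h

lemma ne_zero_of_mem_Sph (hI : I ∈ Sph) : I ≠ 0 :=
  norm_ne_zero_iff.1 <| by rw [norm_eq_one_of_mem_Sph hI]; exact one_ne_zero

lemma re_eq_zero_of_mem_Sph (hI : I ∈ Sph) : I.re = 0 := by
  rw [← Quaternion.sq_eq_neg_normSq, Quaternion.normSq_eq_norm_mul_self,
    norm_eq_one_of_mem_Sph hI, mul_one]
  have h : I ^ 2 = -1 := hI
  simpa using h

lemma neg_mem_Sph (hI : I ∈ Sph) : -I ∈ Sph := by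
  show (-I) ^ 2 = -1
  rw [neg_sq]; exact hI

lemma psi_re (hI : I ∈ Sph) (z : ℂ) : (psi I z).re = z.re := by
  simp [psi, re_eq_zero_of_mem_Sph hI]

lemma psi_sub_re (hI : I ∈ Sph) (z : ℂ) : psi I z - ((psi I z).re : Hq) = z.im • I := by
  rw [psi_re hI, psi, add_sub_cancel_left]

lemma psi_eq_re_iff (hI : I ∈ Sph) (z : ℂ) : psi I z = ((psi I z).re : Hq) ↔ z.im = 0 := by
  rw [← sub_eq_zero, psi_sub_re hI, smul_eq_zero, or_iff_left (ne_zero_of_mem_Sph hI)]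

lemma psi_of_im_eq_zero (K : Hq) {z : ℂ} (hz : z.im = 0) : psi K z = (z.re : Hq) := by
  simp [psi, hz]

lemma psi_injective (hI : I ∈ Sph) : Function.Injective (psi I) := by
  intro z w h
  have hre : z.re = w.re := by rw [← psi_re hI z, h, psi_re hI w]
  have him : z.im • I = w.im • I := by rw [← psi_sub_re hI, h, psi_sub_re hI]
  exact Complex.ext hre (smul_left_injective ℝ (ne_zero_of_mem_Sph hI) him)

lemma psi_neg (K : Hq) (z : ℂ) : psi (-K) z = psi K (star z) := by
  simp [psi, smul_neg]

lemma liftMap_injective {n : ℕ} (hI : I ∈ Sph) : Function.Injective (liftMap (n := n) I) :=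
  fun _ _ h => funext fun k => psi_injective hI (congrFun h k)

lemma isRealH_liftMap_iff {n : ℕ} (hI : I ∈ Sph) (z : Fin n → ℂ) :
    isRealH (liftMap I z) ↔ isRealPt z :=
  forall_congr' fun k => psi_eq_re_iff hI (z k)

lemma imUnit_psi (hI : I ∈ Sph) {z : ℂ} (hz : z.im ≠ 0) :
    imUnit (psi I z) = I ∨ imUnit (psi I z) = -I := by
  rw [imUnit, psi_sub_re hI, norm_smul, norm_eq_one_of_mem_Sph hI, mul_one, smul_smul,
    Real.norm_eq_abs z.im]
  rcases lt_or_gt_of_ne hz with h | h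
  · right
    rw [abs_of_neg h, inv_neg, neg_mul, inv_mul_cancel₀ hz, neg_smul, one_smul]
  · left
    rw [abs_of_pos h, inv_mul_cancel₀ hz, one_smul]

lemma Jmap_liftMap {n : ℕ} (hI : I ∈ Sph) {z : Fin n → ℂ} (hz : ¬ isRealPt z) :
    Jmap (liftMap I z) = I ∨ Jmap (liftMap I z) = -I := by
  classical
  rw [← isRealH_liftMap_iff hI] at hz
  have hex : ∃ k, liftMap I z k ≠ ((liftMap I z k).re : Hq) := not_forall.1 hz
  rw [Jmap, dif_pos hex]
  apply imUnit_psi hI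
  rw [Ne, ← psi_eq_re_iff hI]
  exact (Finset.mem_filter.1 (Finset.min'_mem
    (Finset.univ.filter fun k => liftMap I z k ≠ ((liftMap I z k).re : Hq)) _)).2

end ImaginaryUnits

section Paths

variable {n : ℕ} {Ω : Set (Fin n → Hq)} {γ : C(unitInterval, Fin n → ℂ)}

lemma liftP_conjPath (γ : C(unitInterval, Fin n → ℂ)) (K : Hq) (t : unitInterval) :
    liftP (conjPath γ) K t = liftP γ (-K) t :=
  funext fun k => (psi_neg K (γ t k)).symm

lemma mem_SUnits_conjPath {K : Hq} : K ∈ SUnits Ω (conjPath γ) ↔ -K ∈ SUnits Ω γ := by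
  simp only [SUnits, Set.mem_ofPred_eq, liftP_conjPath]
  exact and_congr_left' ⟨neg_mem_Sph, fun h => neg_neg K ▸ neg_mem_Sph h⟩

lemma conjPath_mem_PathsTo (hγ : γ ∈ PathsTo Ω) : conjPath γ ∈ PathsTo Ω := by
  obtain ⟨h0, K, hK⟩ := hγ
  refine ⟨fun k => ?_, -K, mem_SUnits_conjPath.2 ((neg_neg K).symm ▸ hK)⟩
  simp [conjPath, h0 k]

lemma SUnits_eq_inter_of_range_eq_union {α β μ : C(unitInterval, Fin n → ℂ)}
    (h : Set.range μ = Set.range α ∪ Set.range β) : SUnits Ω μ = SUnits Ω α ∩ SUnits Ω β := by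
  have hrange : ∀ γ : C(unitInterval, Fin n → ℂ), SUnits Ω γ =
      {K | K ∈ Sph ∧ ∀ z ∈ Set.range γ, liftMap K z ∈ Ω} := fun γ => by
    simp only [SUnits, liftP, Set.forall_mem_range]
  ext K
  simp only [hrange, h, Set.mem_union, or_imp, forall_and, Set.mem_inter_iff, Set.mem_ofPred_eq]
  tauto

lemma exists_range_eq_union {X : Type*} [TopologicalSpace X] {α β : C(unitInterval, X)}
    (he : α 1 = β 1) :
    ∃ μ : C(unitInterval, X), μ 0 = α 0 ∧ Set.range μ = Set.range α ∪ Set.range β := by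
  let pα : Path (α 0) (α 1) := ⟨α, rfl, rfl⟩
  let pβ : Path (β 0) (β 1) := ⟨β, rfl, rfl⟩
  refine ⟨(pα.trans (pβ.symm.cast he rfl)).toContinuousMap, Path.source _, ?_⟩
  show Set.range (pα.trans _) = _
  rw [Path.trans_range, Path.cast_coe, Path.symm_range]
  rfl

end Paths

lemma eq_of_add_mul_eq_add_mul {R : Type*} [Ring R] [NoZeroDivisors R] {A B A' B' K L : R}
    (hKL : K ≠ L) (hK : A + K * B = A' + K * B') (hL : A + L * B = A' + L * B') :
    A = A' ∧ B = B' := by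
  have hdiff : (A + K * B) - (A + L * B) = (A' + K * B') - (A' + L * B') := by rw [hK, hL]
  have hB : (K - L) * (B - B') = 0 := by
    calc (K - L) * (B - B')
        = ((A + K * B) - (A + L * B)) - ((A' + K * B') - (A' + L * B')) := by noncomm_ring
      _ = 0 := by rw [hdiff, sub_self]
  obtain rfl : B = B' := sub_eq_zero.1 ((mul_eq_zero.1 hB).resolve_left (sub_ne_zero.2 hKL))
  exact ⟨add_right_cancel hK, rfl⟩

section Stems

variable {n : ℕ} {γ : C(unitInterval, Fin n → ℂ)}

lemma stemFormula_eq {f : (Fin n → Hq) → Hq} {I J : Hq} (hI : I ∈ Sph) (hJ : J ∈ Sph)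
    (hIJ : I ≠ J) (v : Fin 2 → Hq) (hfI : f (liftP γ I 1) = v 0 + I * v 1)
    (hfJ : f (liftP γ J 1) = v 0 + J * v 1) : stemFormula f γ I J = v := by
  have hI2 : I * I = -1 := by rw [← sq]; exact hI
  have hJ2 : J * J = -1 := by rw [← sq]; exact hJ
  have hinv : (I - J)⁻¹ * (I - J) = 1 := inv_mul_cancel₀ (sub_ne_zero.2 hIJ)
  rw [stemFormula, hfI, hfJ]
  funext i
  fin_cases i <;>
    simp only [mulVec, dotProduct, Fin.zero_eta, Fin.mk_one, Fin.isValue, Matrix.smul_apply,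
      of_apply, cons_val', cons_val_fin_one, cons_val_zero, cons_val_one, smul_eq_mul,
      Fin.sum_univ_two, mul_one, mul_neg, neg_mul]
  · calc _ = (I - J)⁻¹ * ((I - J) * v 0 + (I * I - J * J) * v 1) := by noncomm_ring
      _ = v 0 := by rw [hI2, hJ2, sub_self, zero_mul, add_zero, ← mul_assoc, hinv, one_mul]
  · calc _ = (I - J)⁻¹ * ((I - J) * v 1) := by noncomm_ring
      _ = v 1 := by rw [← mul_assoc, hinv, one_mul]

lemma subStem_eq_of_forall {Ω : Set (Fin n → Hq)} {f : (Fin n → Hq) → Hq} (v : Fin 2 → Hq)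
    (hex : ∃ I ∈ SUnits Ω γ, ∃ J ∈ SUnits Ω γ, I ≠ J)
    (hval : ∀ K ∈ SUnits Ω γ, f (liftP γ K 1) = v 0 + K * v 1) : subStem Ω f γ = v := by
  obtain ⟨I, hI, J, hJ, hIJ⟩ := hex
  have hpair : ∃ p : Hq × Hq, p.1 ∈ SUnits Ω γ ∧ p.2 ∈ SUnits Ω γ ∧ p.1 ≠ p.2 :=
    ⟨(I, J), hI, hJ, hIJ⟩
  obtain ⟨hI', hJ', hne⟩ := hpair.choose_spec
  rw [subStem, dif_pos hpair]
  exact stemFormula_eq hI'.1 hJ'.1 hne v (hval _ hI') (hval _ hJ')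

variable {Ω₁ Ω₂ : Set (Fin n → Hq)} {g : (Fin n → Hq) → Hq}

lemma StemPreserving.mem_PathsTo (h₂ : StemPreserving Ω₁ Ω₂) (hγ : γ ∈ PathsTo Ω₁) :
    γ ∈ PathsTo Ω₂ :=
  let ⟨I, hI, _⟩ := h₂.1 γ hγ
  ⟨hγ.1, I, hI⟩

lemma StemPreserving.subStem_eq_of_isStem (h₂ : StemPreserving Ω₁ Ω₂)
    {F : C(unitInterval, Fin n → ℂ) → Fin 2 → Hq} (hF : IsStem Ω₂ g F) (hγ : γ ∈ PathsTo Ω₁) :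
    subStem Ω₂ g γ = F γ :=
  subStem_eq_of_forall _ (h₂.1 γ hγ) (hF γ (h₂.mem_PathsTo hγ))

lemma StemPreserving.subStem_conjPath (h₂ : StemPreserving Ω₁ Ω₂) (hg : IsPathSlice Ω₂ g)
    (hγ : γ ∈ PathsTo Ω₁) :
    subStem Ω₂ g (conjPath γ) = ![subStem Ω₂ g γ 0, -subStem Ω₂ g γ 1] := by
  obtain ⟨F, hF⟩ := hg
  rw [h₂.subStem_eq_of_isStem hF hγ]
  refine subStem_eq_of_forall _ (h₂.1 _ (conjPath_mem_PathsTo hγ)) fun K hK => ?_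
  rw [liftP_conjPath, hF γ (h₂.mem_PathsTo hγ) (-K) (mem_SUnits_conjPath.1 hK)]
  simp

lemma StemPreserving.subStem_eq_of_isRealPt (h₂ : StemPreserving Ω₁ Ω₂) (hγ : γ ∈ PathsTo Ω₁)
    (hreal : isRealPt (γ 1)) (K : Hq) : subStem Ω₂ g γ = ![g (liftP γ K 1), 0] := by
  have hend : ∀ M, liftP γ M 1 = liftP γ K 1 := fun M => funext fun k => by
    simp only [liftP, liftMap, psi_of_im_eq_zero _ (hreal k)]
  refine subStem_eq_of_forall _ (h₂.1 γ hγ) fun M _ => ?_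
  simp [hend M]

lemma StemPreserving.exists_common_units (h₂ : StemPreserving Ω₁ Ω₂)
    {α β : C(unitInterval, Fin n → ℂ)} (hα : α ∈ PathsTo Ω₁) (he : α 1 = β 1) {K : Hq}
    (hKα : K ∈ SUnits Ω₁ α) (hKβ : K ∈ SUnits Ω₁ β) :
    ∃ L ∈ SUnits Ω₂ α ∩ SUnits Ω₂ β, ∃ M ∈ SUnits Ω₂ α ∩ SUnits Ω₂ β, L ≠ M := by
  obtain ⟨μ, hμ0, hμ⟩ := exists_range_eq_union he
  have hμP : μ ∈ PathsTo Ω₁ :=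
    ⟨hμ0 ▸ hα.1, K, (SUnits_eq_inter_of_range_eq_union hμ).symm ▸ ⟨hKα, hKβ⟩⟩
  rw [← SUnits_eq_inter_of_range_eq_union hμ]
  exact h₂.1 μ hμP

lemma StemPreserving.subStem_eq_of_endpoint_eq (h₂ : StemPreserving Ω₁ Ω₂)
    (hg : IsPathSlice Ω₂ g) {α β : C(unitInterval, Fin n → ℂ)} (hα : α ∈ PathsTo Ω₁)
    (hβ : β ∈ PathsTo Ω₁) (he : α 1 = β 1) {K : Hq} (hKα : K ∈ SUnits Ω₁ α)
    (hKβ : K ∈ SUnits Ω₁ β) : subStem Ω₂ g α = subStem Ω₂ g β := by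
  obtain ⟨F, hF⟩ := hg
  obtain ⟨L, ⟨hLα, hLβ⟩, M, ⟨hMα, hMβ⟩, hLM⟩ := h₂.exists_common_units hα he hKα hKβ
  have hstem : ∀ N ∈ SUnits Ω₂ α, N ∈ SUnits Ω₂ β → F α 0 + N * F α 1 = F β 0 + N * F β 1 :=
    fun N hNα hNβ => by
      rw [← hF α (h₂.mem_PathsTo hα) N hNα, ← hF β (h₂.mem_PathsTo hβ) N hNβ, liftP, liftP, he]
  obtain ⟨h0, h1⟩ := eq_of_add_mul_eq_add_mul hLM (hstem L hLα hLβ) (hstem M hMα hMβ)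
  rw [h₂.subStem_eq_of_isStem hF hα, h₂.subStem_eq_of_isStem hF hβ]
  funext i
  fin_cases i
  exacts [h0, h1]

lemma StemPreserving.pointStem_eq_subStem (h₂ : StemPreserving Ω₁ Ω₂) (hg : IsPathSlice Ω₂ g)
    {q : Fin n → Hq} (hq : ¬ isRealH q) {δ : C(unitInterval, Fin n → ℂ)} (hδ : δ ∈ PathsTo Ω₁)
    (hJ : Jmap q ∈ SUnits Ω₁ δ) (hδq : liftP δ (Jmap q) 1 = q) :
    pointStem Ω₁ Ω₂ g q = subStem Ω₂ g δ := by
  have hex : ∃ ε, ε ∈ PathsTo Ω₁ ∧ (∀ t, liftP ε (Jmap q) t ∈ Ω₁) ∧ liftP ε (Jmap q) 1 = q :=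
    ⟨δ, hδ, hJ.2, hδq⟩
  obtain ⟨hε, hεΩ, hεq⟩ := hex.choose_spec
  rw [pointStem, if_neg hq, dif_pos hex]
  exact h₂.subStem_eq_of_endpoint_eq hg hε hδ (liftMap_injective hJ.1 (hεq.trans hδq.symm))
    ⟨hJ.1, hεΩ⟩ hJ

end Stems

theorem row_mul_subStem_eq_general {n : ℕ} (Ω₁ Ω₂ : Set (Fin n → Hq))
    (h₂ : StemPreserving Ω₁ Ω₂)
    (c : Hq) (g : (Fin n → Hq) → Hq) (hg : IsPathSlice Ω₂ g)
    (γ : C(unitInterval, Fin n → ℂ)) (hγ : γ ∈ PathsTo Ω₁)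
    (I : Hq) (hI : I ∈ SUnits Ω₁ γ) (q : Fin n → Hq) (hq : q = liftP γ I 1) :
    c * subStem Ω₂ g γ 0 + (I * c) * subStem Ω₂ g γ 1 =
      c * subStem Ω₂ g (conjPath γ) 0 + (-I * c) * subStem Ω₂ g (conjPath γ) 1 ∧
    c * subStem Ω₂ g γ 0 + (I * c) * subStem Ω₂ g γ 1 =
      c * pointStem Ω₁ Ω₂ g q 0 + (Jmap q * c) * pointStem Ω₁ Ω₂ g q 1 := by
  subst hq
  have hconj : c * subStem Ω₂ g γ 0 + (I * c) * subStem Ω₂ g γ 1 =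
      c * subStem Ω₂ g (conjPath γ) 0 + (-I * c) * subStem Ω₂ g (conjPath γ) 1 := by
    simp only [h₂.subStem_conjPath hg hγ, cons_val_zero, cons_val_one, cons_val_fin_one, neg_mul,
      mul_neg, neg_neg]
  refine ⟨hconj, ?_⟩
  by_cases hre : isRealH (liftP γ I 1)
  · have hreal : isRealPt (γ 1) := (isRealH_liftMap_iff hI.1 _).1 hre
    simp [pointStem, hre, h₂.subStem_eq_of_isRealPt hγ hreal I]
  obtain hJ | hJ : Jmap (liftP γ I 1) = I ∨ Jmap (liftP γ I 1) = -I :=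
    Jmap_liftMap hI.1 (mt (isRealH_liftMap_iff hI.1 _).2 hre)
  · rw [h₂.pointStem_eq_subStem hg hre hγ (by rwa [hJ]) (by rw [hJ]), hJ]
  · have hJγ : Jmap (liftP γ I 1) ∈ SUnits Ω₁ (conjPath γ) := by
      rwa [hJ, mem_SUnits_conjPath, neg_neg]
    rw [hconj, h₂.pointStem_eq_subStem hg hre (conjPath_mem_PathsTo hγ) hJγ
      (by rw [liftP_conjPath, hJ, neg_neg]), hJ]

/-- `(c, Ic)·F_{Ω₁}^g(γ) = (c, −Ic)·F_{Ω₁}^g(γ̄) = (c, 𝔍(q)c)·ℱ_{Ω₁}^g(q)`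
where `q = γ^I(1)`. -/
theorem row_mul_subStem_eq {n : ℕ} (Ω₁ Ω₂ : Set (Fin n → Hq))
    (h₁ : RealPathConnected Ω₁) (h₂ : StemPreserving Ω₁ Ω₂)
    (c : Hq) (g : (Fin n → Hq) → Hq) (hg : IsPathSlice Ω₂ g)
    (γ : C(unitInterval, Fin n → ℂ)) (hγ : γ ∈ PathsTo Ω₁)
    (I : Hq) (hI : I ∈ SUnits Ω₁ γ) (q : Fin n → Hq) (hq : q = liftP γ I 1) :
    c * subStem Ω₂ g γ 0 + (I * c) * subStem Ω₂ g γ 1 =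
      c * subStem Ω₂ g (conjPath γ) 0 + (-I * c) * subStem Ω₂ g (conjPath γ) 1 ∧
    c * subStem Ω₂ g γ 0 + (I * c) * subStem Ω₂ g γ 1 =
      c * pointStem Ω₁ Ω₂ g q 0 + (Jmap q * c) * pointStem Ω₁ Ω₂ g q 1 :=
  row_mul_subStem_eq_general Ω₁ Ω₂ h₂ c g hg γ hγ I hI q hq
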